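/- Let n, k ∈ ℕ and N = n + k. Let Q = Q([N]) be a blue/red colored Boolean lattice with no blue copy of Λ. Then there is no red copy of Q_n in Q if and only if for every k-element subset Y ⊆ [N] there exists a blue Y-shrub in Q (with respect to the partition [N] = ([N]\Y) ∪ Y). -/

import Mathlib

/-- With blue/red coloring `c` (blue = `true`, red = `false`) of the Boolean lattice on a
ground set partitioned into `X ∪ Y`, there is a red `X`-good copy of `Q(X)`: an embedding
`φ` of `Q(X)` with all images red and `φ(A) ∩ X = A` for all `A ⊆ X`. -/
def RedXGoodCopy {V : Type*} [DecidableEq V] (c : Finset V → Bool) (X : Finset V) : Prop :=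
  ∃ φ : Finset V → Finset V,
    (∀ A B : Finset V, A ⊆ X → B ⊆ X → (A ⊆ B ↔ φ A ⊆ φ B)) ∧
    (∀ A : Finset V, A ⊆ X → φ A ∩ X = A) ∧
    (∀ A : Finset V, A ⊆ X → c (φ A) = false)

/-- `S` is an ordered subset of `Y`: a sequence of distinct elements of `Y`
(a vertex of the factorial tree `O(Y)`, ordered by the prefix relation `<+:`). -/
def OrdSubset {V : Type*} (Y : Finset V) (S : List V) : Prop :=
  S.Nodup ∧ ∀ v ∈ S, v ∈ Y

/-- `τ` is a `Y`-good embedding of the factorial tree `O(Y)` into the Boolean lattice: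
for ordered subsets `S, T` of `Y`, `S` is a prefix of `T` iff `τ S ⊆ τ T`, and
`τ S ∩ Y` is the underlying set of `S`. Its image is a `Y`-shrub. -/
def IsShrubMap {V : Type*} [DecidableEq V] (Y : Finset V) (τ : List V → Finset V) : Prop :=
  (∀ S T : List V, OrdSubset Y S → OrdSubset Y T → (S <+: T ↔ τ S ⊆ τ T)) ∧
  (∀ S : List V, OrdSubset Y S → τ S ∩ Y = S.toFinset)

/-- `τ` determines a weak `Y`-shrub: `τ S ∩ Y` is the underlying set of `S` for every
ordered subset `S` of `Y`, and `τ S ⊊ τ T` whenever `S` is a strict prefix of `T`. -/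
def IsWeakShrubMap {V : Type*} [DecidableEq V] (Y : Finset V) (τ : List V → Finset V) : Prop :=
  (∀ S T : List V, OrdSubset Y S → OrdSubset Y T → S <+: T → S ≠ T → τ S ⊂ τ T) ∧
  (∀ S : List V, OrdSubset Y S → τ S ∩ Y = S.toFinset)

/-- There is a monochromatic blue `Y`-shrub (blue = `true`). -/
def BlueYShrub {V : Type*} [DecidableEq V] (c : Finset V → Bool) (Y : Finset V) : Prop :=
  ∃ τ : List V → Finset V, IsShrubMap Y τ ∧ ∀ S : List V, OrdSubset Y S → c (τ S) = true

/-- The coloring `c` admits no blue copy of the poset `Λ`: there are no blue vertices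
`A, B, C` with `A ⊂ C`, `B ⊂ C` and `A`, `B` incomparable. -/
def NoBlueLambda {V : Type*} (c : Finset V → Bool) : Prop :=
  ¬ ∃ A B C : Finset V, c A = true ∧ c B = true ∧ c C = true ∧
      A ⊂ C ∧ B ⊂ C ∧ ¬ A ⊆ B ∧ ¬ B ⊆ A

/-!
A red `X`-good copy `φ` of `Q(X)` and a blue `Y`-shrub `τ` cannot coexist (`X = Yᶜ`): as long as
`φ (τ S ∩ X)` contains an element `v ∈ Y` outside `S`, pass from `S` to `S ++ [v]`; the traces
only grow, so this stops at a set that is a vertex of both. A red copy of `Q_n` contains such an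
`X`-good copy with `|X| = n`, found by picking for each coordinate `i` a point of `f {i}` outside
`f ([n] \ {i})`.

Conversely, call `Z` a blue shrub root if it is blue and each `v ∈ Y \ Z` can be added to it
inside another root whose trace on `Y` grows by `v` only. A root disjoint from `Y` unfolds into a
weak `Y`-shrub, and a blue weak shrub is a shrub: vertices `R ++ [a]`, `R ++ [b]` below a common
vertex would be the legs of a blue `Λ`. If no root is disjoint from `Y`, build red traces
`g A ⊆ Y` by recursion on `A ⊆ X`, keeping `B ∪ g A` from being a root for every `B ⊇ A`: the
traces of the proper subsets of `A` form a chain (otherwise they give a blue `Λ` under any root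
above them), so their union keeps this property, and it is extended greedily by elements that admit
no root extension until `A ∪ g A` is red. Then `A ↦ A ∪ g A` is a red `X`-good copy.
-/

variable {V : Type*}

theorem NoBlueLambda.subset_or_subset {c : Finset V → Bool} (hΛ : NoBlueLambda c)
    {A B C : Finset V} (hA : c A = true) (hB : c B = true) (hC : c C = true)
    (hAC : A ⊆ C) (hBC : B ⊆ C) : A ⊆ B ∨ B ⊆ A := by
  by_contra! h
  obtain ⟨hAB, hBA⟩ := h
  refine hΛ ⟨A, B, C, hA, hB, hC, Finset.ssubset_iff_subset_ne.2 ⟨hAC, ?_⟩,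
    Finset.ssubset_iff_subset_ne.2 ⟨hBC, ?_⟩, hAB, hBA⟩
  · rintro rfl; exact hBA hBC
  · rintro rfl; exact hAB hAC

theorem OrdSubset.of_prefix {Y : Finset V} {S T : List V} (hT : OrdSubset Y T) (h : S <+: T) :
    OrdSubset Y S :=
  ⟨hT.1.sublist h.sublist, fun v hv => hT.2 v (h.sublist.subset hv)⟩

theorem OrdSubset.append_singleton {Y : Finset V} {S : List V} {v : V} (hS : OrdSubset Y S)
    (hvY : v ∈ Y) (hvS : v ∉ S) : OrdSubset Y (S ++ [v]) := by
  refine ⟨List.nodup_append.2 ⟨hS.1, List.nodup_singleton v, ?_⟩, ?_⟩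
  · intro u hu b hb hub
    exact hvS (by simp_all)
  · simpa [or_imp, forall_and] using ⟨hS.2, hvY⟩

theorem List.prefix_or_prefix_or_exists_diverge {α : Type*} :
    ∀ S T : List α, S <+: T ∨ T <+: S ∨
      ∃ (R : List α) (a b : α), a ≠ b ∧ R ++ [a] <+: S ∧ R ++ [b] <+: T
  | [], _ => Or.inl (List.nil_prefix)
  | _ :: _, [] => Or.inr (Or.inl List.nil_prefix)
  | x :: S, y :: T => by
    by_cases hxy : x = y
    · subst hxy
      rcases prefix_or_prefix_or_exists_diverge S T with h | h | ⟨R, a, b, hab, hS, hT⟩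
      · exact Or.inl (List.cons_prefix_cons.2 ⟨rfl, h⟩)
      · exact Or.inr (Or.inl (List.cons_prefix_cons.2 ⟨rfl, h⟩))
      · exact Or.inr (Or.inr ⟨x :: R, a, b, hab, List.cons_prefix_cons.2 ⟨rfl, hS⟩,
          List.cons_prefix_cons.2 ⟨rfl, hT⟩⟩)
    · exact Or.inr (Or.inr ⟨[], x, y, hxy, ⟨S, rfl⟩, ⟨T, rfl⟩⟩)

theorem exists_coordinates {ι : Type*} [Fintype ι] [DecidableEq ι] {f : Finset ι → Finset V}
    (hf : ∀ A B, A ⊆ B ↔ f A ⊆ f B) : ∃ x : ι ↪ V, ∀ i A, x i ∈ f A ↔ i ∈ A := by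
  have hx : ∀ i, ∃ x ∈ f {i}, x ∉ f (Finset.univ.erase i) := fun i =>
    Finset.not_subset.1 fun h => by simpa using (hf _ _).2 h
  choose x hxi hxn using hx
  have key : ∀ i A, x i ∈ f A ↔ i ∈ A := fun i A =>
    ⟨fun h => by_contra fun hi => hxn i ((hf A _).1 (fun a ha => by
        simpa [Finset.mem_erase] using (ne_of_mem_of_not_mem ha hi)) h),
      fun h => (hf {i} A).1 (Finset.singleton_subset_iff.2 h) (hxi i)⟩
  refine ⟨⟨x, fun i j hij => ?_⟩, key⟩
  simpa [eq_comm] using (key j {i}).1 (hij ▸ hxi i)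

variable [DecidableEq V]

theorem union_inter_of_disjoint_of_subset {B W Y : Finset V} (hB : Disjoint B Y) (hW : W ⊆ Y) :
    (B ∪ W) ∩ Y = W := by
  rw [Finset.union_inter_distrib_right, Finset.disjoint_iff_inter_eq_empty.1 hB,
    Finset.empty_union, Finset.inter_eq_left.2 hW]

/-- `Z` is the root of a blue weak shrub over the elements of `Y` not yet in `Z`. -/
inductive IsBlueShrubRoot (c : Finset V → Bool) (Y : Finset V) : Finset V → Prop
  | intro (Z : Finset V) (next : V → Finset V) (blue : c Z = true)
      (extend : ∀ v ∈ Y, v ∉ Z → insert v Z ⊆ next v ∧ next v ∩ Y = insert v (Z ∩ Y))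
      (root : ∀ v ∈ Y, v ∉ Z → IsBlueShrubRoot c Y (next v)) :
      IsBlueShrubRoot c Y Z

section ShrubRoot

variable {c : Finset V → Bool} {Y Z : Finset V}

theorem isBlueShrubRoot_iff : IsBlueShrubRoot c Y Z ↔ c Z = true ∧ ∀ v ∈ Y, v ∉ Z →
    ∃ Z', insert v Z ⊆ Z' ∧ Z' ∩ Y = insert v (Z ∩ Y) ∧ IsBlueShrubRoot c Y Z' := by
  constructor
  · rintro ⟨Z, next, blue, extend, root⟩
    exact ⟨blue, fun v hv hvZ => ⟨next v, (extend v hv hvZ).1, (extend v hv hvZ).2, root v hv hvZ⟩⟩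
  · rintro ⟨blue, h⟩
    choose! next hsub htr hroot using h
    exact ⟨Z, next, blue, fun v hv hvZ => ⟨hsub v hv hvZ, htr v hv hvZ⟩, hroot⟩

theorem IsBlueShrubRoot.blue (h : IsBlueShrubRoot c Y Z) : c Z = true :=
  (isBlueShrubRoot_iff.1 h).1

open Classical in
/-- Falling back to `Z` keeps every fold of `rootStep` monotone. -/
noncomputable def rootStep (c : Finset V → Bool) (Y Z : Finset V) (v : V) : Finset V :=
  if h : ∃ Z', insert v Z ⊆ Z' ∧ Z' ∩ Y = insert v (Z ∩ Y) ∧ IsBlueShrubRoot c Y Z'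
  then h.choose else Z

theorem subset_foldl_rootStep (S : List V) (Z : Finset V) : Z ⊆ S.foldl (rootStep c Y) Z := by
  induction S generalizing Z with
  | nil => exact subset_rfl
  | cons v S ih =>
    refine subset_trans ?_ (ih _)
    unfold rootStep
    split_ifs with h
    · exact (Finset.subset_insert v Z).trans h.choose_spec.1
    · exact subset_rfl

theorem IsBlueShrubRoot.foldl_rootStep {S : List V} (h : IsBlueShrubRoot c Y Z)
    (hS : OrdSubset Y S) (hSZ : ∀ v ∈ S, v ∉ Z) :
    S.foldl (rootStep c Y) Z ∩ Y = Z ∩ Y ∪ S.toFinset ∧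
      IsBlueShrubRoot c Y (S.foldl (rootStep c Y) Z) := by
  induction S generalizing Z with
  | nil => simpa using h
  | cons v S ih =>
    obtain ⟨⟨hvS, hSnd⟩, hvY, hSY⟩ : (v ∉ S ∧ S.Nodup) ∧ v ∈ Y ∧ ∀ u ∈ S, u ∈ Y := by
      simpa [OrdSubset] using hS
    have hex := (isBlueShrubRoot_iff.1 h).2 v hvY (hSZ v List.mem_cons_self)
    have hstep : rootStep c Y Z v ∩ Y = insert v (Z ∩ Y) ∧
        IsBlueShrubRoot c Y (rootStep c Y Z v) := by
      rw [rootStep, dif_pos hex]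
      exact hex.choose_spec.2
    have hSstep : ∀ u ∈ S, u ∉ rootStep c Y Z v := by
      intro u hu hmem
      have : u ∈ insert v (Z ∩ Y) := hstep.1 ▸ Finset.mem_inter.2 ⟨hmem, hSY u hu⟩
      rcases Finset.mem_insert.1 this with rfl | hu'
      · exact hvS hu
      · exact hSZ u (List.mem_cons_of_mem v hu) (Finset.mem_inter.1 hu').1
    obtain ⟨htr, hroot⟩ := ih hstep.2 ⟨hSnd, hSY⟩ hSstep
    refine ⟨?_, hroot⟩
    rw [List.foldl_cons, htr, hstep.1, List.toFinset_cons]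
    ext; simp only [Finset.mem_union, Finset.mem_insert]; tauto

theorem IsBlueShrubRoot.isWeakShrubMap (h : IsBlueShrubRoot c Y Z) (hZ : Disjoint Z Y) :
    IsWeakShrubMap Y (fun S => S.foldl (rootStep c Y) Z) ∧
      ∀ S, OrdSubset Y S → c (S.foldl (rootStep c Y) Z) = true := by
  have hfold : ∀ S, OrdSubset Y S → S.foldl (rootStep c Y) Z ∩ Y = S.toFinset ∧
      IsBlueShrubRoot c Y (S.foldl (rootStep c Y) Z) := by
    intro S hS
    have hSZ : ∀ v ∈ S, v ∉ Z := fun v hv hvZ => Finset.disjoint_left.1 hZ hvZ (hS.2 v hv)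
    simpa [Finset.disjoint_iff_inter_eq_empty.1 hZ] using h.foldl_rootStep hS hSZ
  refine ⟨⟨?_, fun S hS => (hfold S hS).1⟩, fun S hS => (hfold S hS).2.blue⟩
  rintro S _ hS hT ⟨T, rfl⟩ hne
  obtain ⟨u, hu⟩ := List.exists_mem_of_ne_nil T (by rintro rfl; simp at hne)
  have huS : u ∉ S := fun h => List.disjoint_of_nodup_append hT.1 h hu
  refine Finset.ssubset_iff_subset_ne.2 ⟨by simpa using subset_foldl_rootStep T _, ?_⟩
  intro heq
  simp only at heq
  have hmem : u ∈ (S ++ T).foldl (rootStep c Y) Z ∩ Y := by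
    rw [(hfold _ hT).1]; simp [hu]
  rw [← heq, (hfold S hS).1] at hmem
  exact huS (List.mem_toFinset.1 hmem)

end ShrubRoot

theorem mem_iff_of_inter_eq {τ Y : Finset V} {S : List V} (h : τ ∩ Y = S.toFinset) {v : V}
    (hv : v ∈ Y) : v ∈ τ ↔ v ∈ S := by
  rw [← List.mem_toFinset, ← h, Finset.mem_inter, and_iff_left hv]

theorem IsWeakShrubMap.isShrubMap {c : Finset V → Bool} {Y : Finset V} {τ : List V → Finset V}
    (hw : IsWeakShrubMap Y τ) (hblue : ∀ S, OrdSubset Y S → c (τ S) = true)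
    (hΛ : NoBlueLambda c) : IsShrubMap Y τ := by
  have hmono : ∀ S T, OrdSubset Y S → OrdSubset Y T → S <+: T → τ S ⊆ τ T := by
    intro S T hS hT hST
    by_cases h : S = T
    · rw [h]
    · exact (hw.1 S T hS hT hST h).subset
  refine ⟨fun S T hS hT => ⟨hmono S T hS hT, fun hsub => ?_⟩, hw.2⟩
  rcases List.prefix_or_prefix_or_exists_diverge S T with h | h | ⟨R, a, b, hab, hRa, hRb⟩
  · exact h
  · by_contra hne
    exact (hw.1 T S hT hS h (by rintro rfl; exact hne h)).not_subset hsub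
  · exfalso
    have oRa := hS.of_prefix hRa
    have oRb := hT.of_prefix hRb
    have haR : a ∉ R := fun h => (List.disjoint_of_nodup_append oRa.1) h (List.mem_singleton_self a)
    have hbR : b ∉ R := fun h => (List.disjoint_of_nodup_append oRb.1) h (List.mem_singleton_self b)
    have haY : a ∈ Y := oRa.2 a (by simp)
    have hbY : b ∈ Y := oRb.2 b (by simp)
    have haa : a ∈ τ (R ++ [a]) := (mem_iff_of_inter_eq (hw.2 _ oRa) haY).2 (by simp)
    have hbb : b ∈ τ (R ++ [b]) := (mem_iff_of_inter_eq (hw.2 _ oRb) hbY).2 (by simp)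
    have hab' : a ∉ τ (R ++ [b]) := by
      rw [mem_iff_of_inter_eq (hw.2 _ oRb) haY]; simp [haR, hab]
    have hba' : b ∉ τ (R ++ [a]) := by
      rw [mem_iff_of_inter_eq (hw.2 _ oRa) hbY]; simp [hbR, hab.symm]
    rcases hΛ.subset_or_subset (hblue _ oRa) (hblue _ oRb) (hblue _ hT)
        ((hmono _ _ oRa hS hRa).trans hsub) (hmono _ _ oRb hT hRb) with h | h
    exacts [hab' (h haa), hba' (h hbb)]

theorem blueYShrub_of_isBlueShrubRoot {c : Finset V → Bool} {Y Z : Finset V}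
    (hΛ : NoBlueLambda c) (h : IsBlueShrubRoot c Y Z) (hZ : Disjoint Z Y) : BlueYShrub c Y :=
  let ⟨hw, hblue⟩ := h.isWeakShrubMap hZ
  ⟨_, hw.isShrubMap hblue hΛ, hblue⟩

section RedTrace

variable {c : Finset V → Bool} {Y : Finset V}

def NoShrubRootAbove (c : Finset V → Bool) (Y A W : Finset V) : Prop :=
  ∀ B, Disjoint B Y → A ⊆ B → ¬IsBlueShrubRoot c Y (B ∪ W)

theorem NoShrubRootAbove.mono {A A' W : Finset V} (h : NoShrubRootAbove c Y A W) (hA : A ⊆ A') :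
    NoShrubRootAbove c Y A' W :=
  fun B hB hAB => h B hB (hA.trans hAB)

def IsRedExtension (c : Finset V → Bool) (Y A U W : Finset V) : Prop :=
  U ⊆ W ∧ W ⊆ Y ∧ c (A ∪ W) = false ∧ NoShrubRootAbove c Y A W ∧ (W = U ∨ c (A ∪ U) = true)

theorem exists_isRedExtension {A U : Finset V} (hA : Disjoint A Y) (hU : U ⊆ Y)
    (h : NoShrubRootAbove c Y A U) : ∃ W, IsRedExtension c Y A U W := by
  induction hn : (Y \ U).card using Nat.strong_induction_on generalizing U with
  | _ n ih =>
  cases hc : c (A ∪ U)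
  · exact ⟨U, subset_rfl, hU, hc, h, Or.inl rfl⟩
  · have hnot := h A hA subset_rfl
    rw [isBlueShrubRoot_iff, union_inter_of_disjoint_of_subset hA hU] at hnot
    push Not at hnot
    obtain ⟨v, hvY, hvAU, hv⟩ := hnot hc
    have hvU : v ∉ U := fun h => hvAU (Finset.mem_union_right A h)
    have hU' : NoShrubRootAbove c Y A (insert v U) := by
      intro B hB hAB
      refine hv _ ?_ (union_inter_of_disjoint_of_subset hB (Finset.insert_subset hvY hU))
      exact Finset.insert_subset (by simp)
        (Finset.union_subset_union hAB (Finset.subset_insert v U))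
    have hlt : (Y \ insert v U).card < n := by
      rw [← hn, Finset.sdiff_insert]
      exact Finset.card_erase_lt_of_mem (Finset.mem_sdiff.2 ⟨hvY, hvU⟩)
    obtain ⟨W, hUW, hWY, hred, hno, -⟩ := ih _ hlt (Finset.insert_subset hvY hU) hU' rfl
    exact ⟨W, (Finset.subset_insert v U).trans hUW, hWY, hred, hno, Or.inr hc⟩

/-- `witness` records a blue set below each element of the trace; it is what turns two
incomparable traces into a blue `Λ`. -/
structure IsRedTrace (c : Finset V → Bool) (Y : Finset V) (g : Finset V → Finset V)
    (A : Finset V) : Prop where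
  subset : g A ⊆ Y
  red : c (A ∪ g A) = false
  noShrubRootAbove : NoShrubRootAbove c Y A (g A)
  mono : ∀ A' ⊆ A, g A' ⊆ g A
  witness : ∀ v ∈ g A, ∃ A' ⊆ A, v ∈ g A' ∧ ∃ T ⊆ g A', c (A' ∪ T) = true

theorem IsRedTrace.subset_or_subset {g : Finset V → Finset V} {A₁ A₂ B W : Finset V}
    (hΛ : NoBlueLambda c) (h₁ : IsRedTrace c Y g A₁) (h₂ : IsRedTrace c Y g A₂)
    (hB : Disjoint B Y) (hA₁ : A₁ ⊆ B) (hA₂ : A₂ ⊆ B) (hW₁ : g A₁ ⊆ W) (hW₂ : g A₂ ⊆ W)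
    (hblue : c (B ∪ W) = true) : g A₁ ⊆ g A₂ ∨ g A₂ ⊆ g A₁ := by
  by_contra! h
  obtain ⟨v₁, hv₁, hv₁'⟩ := Finset.not_subset.1 h.1
  obtain ⟨v₂, hv₂, hv₂'⟩ := Finset.not_subset.1 h.2
  obtain ⟨A₁', hA₁', hvA₁', T₁, hT₁, hblue₁⟩ := h₁.witness v₁ hv₁
  obtain ⟨A₂', hA₂', hvA₂', T₂, hT₂, hblue₂⟩ := h₂.witness v₂ hv₂
  have hT₁Y : T₁ ⊆ Y := hT₁.trans ((h₁.mono A₁' hA₁').trans h₁.subset)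
  have hT₂Y : T₂ ⊆ Y := hT₂.trans ((h₂.mono A₂' hA₂').trans h₂.subset)
  have hcancel : ∀ {A A' T T'}, Disjoint A Y → T' ⊆ Y → A ∪ T ⊆ A' ∪ T' → A ⊆ A' :=
    fun hA hT' hsub => Disjoint.left_le_of_le_sup_right (Finset.subset_union_left.trans hsub)
      (hA.mono_right hT')
  rcases hΛ.subset_or_subset hblue₁ hblue₂ hblue
      (Finset.union_subset_union (hA₁'.trans hA₁) (hT₁.trans ((h₁.mono A₁' hA₁').trans hW₁)))
      (Finset.union_subset_union (hA₂'.trans hA₂) (hT₂.trans ((h₂.mono A₂' hA₂').trans hW₂)))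
    with h | h
  · have := hcancel (hB.mono_left (hA₁'.trans hA₁)) hT₂Y h
    exact hv₁' (h₂.mono A₁' (this.trans hA₂') hvA₁')
  · have := hcancel (hB.mono_left (hA₂'.trans hA₂)) hT₁Y h
    exact hv₂' (h₁.mono A₂' (this.trans hA₁') hvA₂')

theorem noShrubRootAbove_sup {g : Finset V → Finset V} {A : Finset V} (hΛ : NoBlueLambda c)
    (hroot : NoShrubRootAbove c Y ∅ ∅) (hg : ∀ A' ⊂ A, IsRedTrace c Y g A') :
    NoShrubRootAbove c Y A (A.ssubsets.sup g) := by
  intro B hB hAB hsup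
  rcases A.ssubsets.eq_empty_or_nonempty with hemp | hne
  · exact hroot B hB (Finset.empty_subset B) (by simpa [hemp] using hsup)
  obtain ⟨A₀, hA₀, hmax⟩ := A.ssubsets.exists_max_image (fun A' => (g A').card) hne
  rw [Finset.mem_ssubsets] at hA₀
  have heq : A.ssubsets.sup g = g A₀ := by
    refine le_antisymm (Finset.sup_le fun A' hA' => ?_) (Finset.le_sup (Finset.mem_ssubsets.2 hA₀))
    rw [Finset.mem_ssubsets] at hA'
    rcases (hg A' hA').subset_or_subset hΛ (hg A₀ hA₀) hB (hA'.subset.trans hAB)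
        (hA₀.subset.trans hAB) (Finset.le_sup (Finset.mem_ssubsets.2 hA'))
        (Finset.le_sup (Finset.mem_ssubsets.2 hA₀)) hsup.blue with h | h
    · exact h
    · exact (Finset.eq_of_subset_of_card_le h (hmax A' (Finset.mem_ssubsets.2 hA'))).ge
  exact (hg A₀ hA₀).noShrubRootAbove.mono hA₀.subset B hB hAB (heq ▸ hsup)

open Classical in
noncomputable def redTrace (c : Finset V → Bool) (Y A : Finset V) : Finset V :=
  let U := A.ssubsets.attach.sup fun A' => redTrace c Y A'.1
  if h : ∃ W, IsRedExtension c Y A U W then h.choose else U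
termination_by A.card
decreasing_by exact Finset.card_lt_card (Finset.mem_ssubsets.1 A'.2)

theorem isRedExtension_redTrace {A : Finset V}
    (h : ∃ W, IsRedExtension c Y A (A.ssubsets.sup (redTrace c Y)) W) :
    IsRedExtension c Y A (A.ssubsets.sup (redTrace c Y)) (redTrace c Y A) := by
  rw [redTrace, Finset.sup_attach, dif_pos h]
  exact h.choose_spec

theorem isRedTrace_redTrace (hΛ : NoBlueLambda c) (hroot : NoShrubRootAbove c Y ∅ ∅) :
    ∀ A : Finset V, Disjoint A Y → IsRedTrace c Y (redTrace c Y) A := by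
  intro A
  induction A using Finset.strongInduction with
  | _ A ih =>
  intro hA
  have ih' : ∀ A' ⊂ A, IsRedTrace c Y (redTrace c Y) A' :=
    fun A' hA' => ih A' hA' (hA.mono_left hA'.subset)
  set U := A.ssubsets.sup (redTrace c Y)
  have hUY : U ⊆ Y := Finset.sup_le fun A' hA' => (ih' A' (Finset.mem_ssubsets.1 hA')).subset
  obtain ⟨hUW, hWY, hred, hno, hgrow⟩ := isRedExtension_redTrace
    (exists_isRedExtension hA hUY (noShrubRootAbove_sup hΛ hroot ih'))
  refine ⟨hWY, hred, hno, fun A' hA' => ?_, fun v hv => ?_⟩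
  · rcases hA'.eq_or_ssubset with rfl | hss
    · exact subset_rfl
    · exact (Finset.le_sup (Finset.mem_ssubsets.2 hss)).trans hUW
  · by_cases hvU : v ∈ U
    · obtain ⟨A', hA', hvA'⟩ := Finset.mem_sup.1 hvU
      rw [Finset.mem_ssubsets] at hA'
      obtain ⟨A'', hA'', hvA'', hT⟩ := (ih' A' hA').witness v hvA'
      exact ⟨A'', hA''.trans hA'.subset, hvA'', hT⟩
    · rcases hgrow with hWU | hblue
      · exact absurd (by rwa [hWU] at hv) hvU
      · exact ⟨A, subset_rfl, hv, U, hUW, hblue⟩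

theorem redXGoodCopy_of_noShrubRootAbove {X : Finset V} (hΛ : NoBlueLambda c)
    (hroot : NoShrubRootAbove c Y ∅ ∅) (hXY : Disjoint X Y) : RedXGoodCopy c X := by
  have hg : ∀ A ⊆ X, IsRedTrace c Y (redTrace c Y) A :=
    fun A hA => isRedTrace_redTrace hΛ hroot A (hXY.mono_left hA)
  refine ⟨fun A => A ∪ redTrace c Y A, fun A B hA hB => ⟨fun hAB => ?_, fun hsub => ?_⟩,
    fun A hA => ?_, fun A hA => (hg A hA).red⟩
  · exact Finset.union_subset_union hAB ((hg B hB).mono A hAB)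
  · exact Disjoint.left_le_of_le_sup_right (Finset.subset_union_left.trans hsub)
      ((hXY.mono_left hA).mono_right (hg B hB).subset)
  · rw [Finset.union_inter_distrib_right, Finset.inter_eq_left.2 hA,
      Finset.disjoint_iff_inter_eq_empty.1 (hXY.symm.mono_left (hg A hA).subset),
      Finset.union_empty]

theorem blueYShrub_of_not_redXGoodCopy {X : Finset V} (hΛ : NoBlueLambda c) (hXY : Disjoint X Y)
    (h : ¬RedXGoodCopy c X) : BlueYShrub c Y := by
  by_contra hno
  refine h (redXGoodCopy_of_noShrubRootAbove hΛ (fun B hB _ hroot => hno ?_) hXY)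
  exact blueYShrub_of_isBlueShrubRoot hΛ (by simpa using hroot) hB

end RedTrace

section Chase

variable [Fintype V] {Y : Finset V}

theorem exists_eq_of_isShrubMap {φ : Finset V → Finset V} {τ : List V → Finset V}
    (hτ : IsShrubMap Y τ) (hφ : ∀ D D', D' ⊆ Yᶜ → D ⊆ D' → φ D ⊆ φ D')
    (htr : ∀ D ⊆ Yᶜ, φ D ∩ Yᶜ = D) :
    ∃ S, OrdSubset Y S ∧ φ (τ S ∩ Yᶜ) = τ S := by
  suffices h : ∀ S, OrdSubset Y S → S.toFinset ⊆ φ (τ S ∩ Yᶜ) →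
      ∃ S, OrdSubset Y S ∧ φ (τ S ∩ Yᶜ) = τ S from
    h [] ⟨List.nodup_nil, by simp⟩ (by simp)
  intro S
  induction hn : (Y \ S.toFinset).card using Nat.strong_induction_on generalizing S with
  | _ n ih =>
  intro hS hinv
  by_cases hφS : φ (τ S ∩ Yᶜ) ∩ Y ⊆ S.toFinset
  · refine ⟨S, hS, Finset.ext fun u => ?_⟩
    by_cases hu : u ∈ Y
    · rw [mem_iff_of_inter_eq (hτ.2 S hS) hu]
      exact ⟨fun h => List.mem_toFinset.1 (hφS (Finset.mem_inter.2 ⟨h, hu⟩)),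
        fun h => hinv (List.mem_toFinset.2 h)⟩
    · have := congrArg (u ∈ ·) (htr (τ S ∩ Yᶜ) Finset.inter_subset_right)
      simpa [hu] using this
  · obtain ⟨v, hv, hvS⟩ := Finset.not_subset.1 hφS
    obtain ⟨hvφ, hvY⟩ := Finset.mem_inter.1 hv
    rw [List.mem_toFinset] at hvS
    have hS' := hS.append_singleton hvY hvS
    have hττ : τ S ⊆ τ (S ++ [v]) := (hτ.1 S _ hS hS').1 (List.prefix_append S [v])
    have hφφ : φ (τ S ∩ Yᶜ) ⊆ φ (τ (S ++ [v]) ∩ Yᶜ) :=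
      hφ _ _ Finset.inter_subset_right (Finset.inter_subset_inter_right hττ)
    have hS'v : (S ++ [v]).toFinset = insert v S.toFinset := by ext; simp
    have hlt : (Y \ (S ++ [v]).toFinset).card < n := by
      rw [← hn, hS'v, Finset.sdiff_insert]
      exact Finset.card_erase_lt_of_mem (Finset.mem_sdiff.2 ⟨hvY, by simpa using hvS⟩)
    refine ih _ hlt _ rfl hS' ?_
    rw [hS'v]
    exact Finset.insert_subset (hφφ hvφ) (hinv.trans hφφ)

theorem not_redXGoodCopy_compl_of_blueYShrub {c : Finset V → Bool} (h : BlueYShrub c Y) :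
    ¬RedXGoodCopy c Yᶜ := by
  rintro ⟨φ, hφ, htr, hred⟩
  obtain ⟨τ, hτ, hblue⟩ := h
  obtain ⟨S, hS, heq⟩ := exists_eq_of_isShrubMap hτ
    (fun D D' hD' hDD' => (hφ D D' (hDD'.trans hD') hD').1 hDD') htr
  have := hred (τ S ∩ Yᶜ) Finset.inter_subset_right
  rw [heq, hblue S hS] at this
  exact Bool.noConfusion this

end Chase

section Copies

variable {c : Finset V → Bool}

theorem RedXGoodCopy.exists_copy {ι : Type*} {X : Finset V} (h : RedXGoodCopy c X) (e : ι ↪ V)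
    (he : ∀ i, e i ∈ X) : ∃ f : Finset ι → Finset V, Function.Injective f ∧
      (∀ A B, A ⊆ B ↔ f A ⊆ f B) ∧ ∀ A, c (f A) = false := by
  obtain ⟨φ, hφ, -, hred⟩ := h
  have hmap : ∀ A : Finset ι, A.map e ⊆ X := fun A x hx => by
    obtain ⟨i, -, rfl⟩ := Finset.mem_map.1 hx
    exact he i
  have hiff : ∀ A B : Finset ι, A ⊆ B ↔ φ (A.map e) ⊆ φ (B.map e) := fun A B => by
    rw [← hφ _ _ (hmap A) (hmap B), Finset.map_subset_map]
  exact ⟨fun A => φ (A.map e), fun A B hAB => subset_antisymm ((hiff A B).2 hAB.le)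
    ((hiff B A).2 hAB.ge), hiff, fun A => hred _ (hmap A)⟩

theorem exists_redXGoodCopy_of_copy {ι : Type*} [Fintype ι] [DecidableEq ι]
    {f : Finset ι → Finset V} (hf : ∀ A B, A ⊆ B ↔ f A ⊆ f B) (hred : ∀ A, c (f A) = false) :
    ∃ X : Finset V, X.card = Fintype.card ι ∧ RedXGoodCopy c X := by
  obtain ⟨x, hx⟩ := exists_coordinates hf
  have hmem : ∀ {D : Finset V}, D ⊆ Finset.univ.map x → ∀ u ∈ D, ∃ i, x i = u := fun hD u hu =>
    by simpa using hD hu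
  refine ⟨Finset.univ.map x, by simp, fun D => f {i | x i ∈ D}, fun D D' hD _ => ?_,
    fun D hD => Finset.ext fun u => ?_, fun D _ => hred _⟩
  · rw [← hf]
    refine ⟨fun h i => by simpa using @h (x i), fun h u hu => ?_⟩
    obtain ⟨i, rfl⟩ := hmem hD u hu
    simpa using @h i (by simpa using hu)
  · constructor
    · intro hu
      obtain ⟨i, rfl⟩ : ∃ i, x i = u := by simpa using (Finset.mem_inter.1 hu).2
      simpa using (hx i _).1 (Finset.mem_inter.1 hu).1
    · intro hu
      obtain ⟨i, rfl⟩ := hmem hD u hu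
      simpa [hx] using hu

end Copies

/-- Let `N = n + k` and let `Q([N])` be blue/red colored with no blue copy
of `Λ`. Then there is no red copy of `Q_n` if and only if for every `k`-element subset
`Y ⊆ [N]` there is a blue `Y`-shrub. -/
theorem statement15 (n k : ℕ) (c : Finset (Fin (n + k)) → Bool) (hΛ : NoBlueLambda c) :
    (¬ ∃ f : Finset (Fin n) → Finset (Fin (n + k)),
        Function.Injective f ∧
        (∀ A B : Finset (Fin n), A ⊆ B ↔ f A ⊆ f B) ∧
        ∀ A : Finset (Fin n), c (f A) = false) ↔
      (∀ Y : Finset (Fin (n + k)), Y.card = k → BlueYShrub c Y) := by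
  constructor
  · intro hno Y hY
    have hX : Yᶜ.card = n := by simp [Finset.card_compl, hY]
    refine blueYShrub_of_not_redXGoodCopy hΛ disjoint_compl_left fun hred => hno ?_
    exact hred.exists_copy (Yᶜ.orderEmbOfFin hX).toEmbedding (Yᶜ.orderEmbOfFin_mem hX)
  · rintro hshrub ⟨f, -, hf, hred⟩
    obtain ⟨X, hX, hXred⟩ := exists_redXGoodCopy_of_copy hf hred
    have hY : Xᶜ.card = k := by simp [Finset.card_compl, hX]
    exact not_redXGoodCopy_compl_of_blueYShrub (hshrub Xᶜ hY) (by rwa [compl_compl])
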